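/- arXiv:1911.07469 — 2 statements merged into one kernel-verified Lean document; each statement's English description precedes it below -/
import Mathlib

section
/- Let (T,λ) be an edge-labeled phylogenetic tree on X with color set M that explains a Fitch map ε. Then for every leaf y ∈ X and every color m ∈ M there exists a vertex v of T such that: (a) no edge on the path from v to y carries color m, and (b) if v is not the root, then the edge (par(v), v) carries color m. Moreover, for any vertex v, conditions (a) and (b) hold if and only if the complementary neighborhood N_{¬m}[y] equals the cluster C_T(v). -/
/-- A finite rooted phylogenetic tree on leaf set `X`, with vertex type `V`.
Vertices are encoded via a parent function; `par root = root`. -/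
structure PhyloTree (V X : Type) : Type where
  fin : Finite V
  root : V
  par : V → V
  par_root : par root = root
  reach : ∀ v : V, ∃ n : ℕ, par^[n] v = root
  leaf : X → V
  leaf_inj : Function.Injective leaf
  leaf_isLeaf : ∀ (x : X) (u : V), par u = leaf x → u = leaf x
  leaf_only : ∀ v : V, (∀ u : V, par u = v → u = v) → ∃ x : X, leaf x = v
  root_deg : (∃ x : X, leaf x = root) ∨ 2 ≤ {u : V | par u = root ∧ u ≠ root}.ncard
  inner_deg : ∀ v : V, v ≠ root → (¬ ∃ x : X, leaf x = v) →
      2 ≤ {u : V | par u = v ∧ u ≠ v}.ncard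

namespace PhyloTree

variable {V X : Type}

/-- `T.anc u v` : `u` is an ancestor of `v`, i.e. `u ⪯_T v`. -/
def anc (T : PhyloTree V X) (u v : V) : Prop := ∃ n : ℕ, T.par^[n] v = u

/-- `l` is the last common ancestor of `a` and `b`. -/
def IsLca (T : PhyloTree V X) (l a b : V) : Prop :=
  T.anc l a ∧ T.anc l b ∧ ∀ u : V, T.anc u a → T.anc u b → T.anc u l

/-- The cluster of `v`: the set of leaves below `v`. -/
def cluster (T : PhyloTree V X) (v : V) : Set X := {x : X | T.anc v (T.leaf x)}

/-- The cluster set `C(T)`. -/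
def clusterSet (T : PhyloTree V X) : Set (Set X) := {S : Set X | ∃ v : V, S = T.cluster v}

/-- The edge `(par u, u)` lies on the descending path from `a` down to `b`. -/
def edgeOnDown (T : PhyloTree V X) (a b u : V) : Prop :=
  T.anc a u ∧ u ≠ a ∧ T.anc u b

/-- The edge `(par u, u)` lies on the unique path between `v` and `w`. -/
def edgeOnPath (T : PhyloTree V X) (v w u : V) : Prop :=
  ∃ l : V, T.IsLca l v w ∧ (T.edgeOnDown l v u ∨ T.edgeOnDown l w u)

/-- `T` displays the rooted triple `ab|c`. -/
def Displays (T : PhyloTree V X) (a b c : X) : Prop :=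
  ∃ l3 l2 : V, T.IsLca l2 (T.leaf a) (T.leaf b) ∧
    T.IsLca l3 l2 (T.leaf c) ∧ l3 ≠ l2

end PhyloTree

/-- `(T, lab)` explains `ε` : for distinct leaves `x,y`, `m ∈ ε x y` iff there is an
`m`-edge on the path from `lca(x,y)` down to `y`. -/
def Explains {V X M : Type} (T : PhyloTree V X) (lab : V → Set M)
    (ε : X → X → Set M) : Prop :=
  ∀ x y : X, x ≠ y → ∀ m : M,
    (m ∈ ε x y ↔ ∃ l : V, T.IsLca l (T.leaf x) (T.leaf y) ∧
      ∃ u : V, T.edgeOnDown l (T.leaf y) u ∧ m ∈ lab u)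

/-- `ε` is a Fitch map: it is explained by some edge-labeled phylogenetic tree. -/
def IsFitchMap {X M : Type} (ε : X → X → Set M) : Prop :=
  ∃ (V : Type) (T : PhyloTree V X) (lab : V → Set M), Explains T lab ε

/-- The complementary neighborhood `N_{¬m}[y]`. -/
def Nbr {X M : Type} (ε : X → X → Set M) (m : M) (y : X) : Set X :=
  {x : X | x ≠ y ∧ m ∉ ε x y} ∪ {y}

/-- The collection `N[ε]` of all complementary neighborhoods. -/
def NbrSet {X M : Type} (ε : X → X → Set M) : Set (Set X) :=
  {N : Set X | ∃ (m : M) (y : X), N = Nbr ε m y}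

/-- A set system is hierarchy-like if any two members intersect in `∅` or one of them. -/
def HLike {X : Type} (H : Set (Set X)) : Prop :=
  ∀ P ∈ H, ∀ Q ∈ H, P ∩ Q = P ∨ P ∩ Q = Q ∨ P ∩ Q = ∅

/-- The inequality condition (IC). -/
def IneqCond {X M : Type} (ε : X → X → Set M) : Prop :=
  ∀ (m : M) (y y' : X), y' ∈ Nbr ε m y → (Nbr ε m y').ncard ≤ (Nbr ε m y).ncard




namespace PhyloTree

variable {V X : Type} (T : PhyloTree V X)

lemma root_fix (n : ℕ) : T.par^[n] T.root = T.root := by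
  induction n with
  | zero => rfl
  | succ n ih => rw [Function.iterate_succ_apply', ih, T.par_root]

lemma cycle {v : V} {n : ℕ} (h : T.par^[n] v = v) (hn : n ≠ 0) : v = T.root := by
  obtain ⟨N, hN⟩ := T.reach v
  have key : ∀ k : ℕ, T.par^[k * n] v = v := by
    intro k
    induction k with
    | zero => simp
    | succ k ih => rw [Nat.succ_mul, Function.iterate_add_apply, h, ih]
  have h1 : N * n = (N * n - N) + N := by
    have : N ≤ N * n := Nat.le_mul_of_pos_right N (Nat.pos_of_ne_zero hn)
    omega
  have := key N
  rw [h1, Function.iterate_add_apply, hN, T.root_fix] at this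
  exact this.symm

lemma anc_refl (v : V) : T.anc v v := ⟨0, rfl⟩

lemma anc_trans {a b c : V} : T.anc a b → T.anc b c → T.anc a c
  | ⟨i, hi⟩, ⟨j, hj⟩ => ⟨i + j, by rw [Function.iterate_add_apply, hj, hi]⟩

lemma anc_antisymm {a b : V} : T.anc a b → T.anc b a → a = b := by
  rintro ⟨i, hi⟩ ⟨j, hj⟩
  rcases Nat.eq_zero_or_pos (i + j) with h0 | hpos
  · obtain ⟨hi0, hj0⟩ : i = 0 ∧ j = 0 := by omega
    subst hi0; exact hi.symm
  · have hcyc : T.par^[i + j] a = a := by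
      rw [Function.iterate_add_apply, hj, hi]
    have ha : a = T.root := T.cycle hcyc (by omega)
    have hb : b = T.root := by rw [← hj, ha, T.root_fix]
    rw [ha, hb]

lemma anc_root (v : V) : T.anc T.root v := T.reach v

lemma anc_comparable {a b z : V} : T.anc a z → T.anc b z → T.anc a b ∨ T.anc b a := by
  rintro ⟨i, hi⟩ ⟨j, hj⟩
  rcases le_total i j with hij | hij
  · right
    refine ⟨j - i, ?_⟩
    rw [← hi, ← Function.iterate_add_apply, Nat.sub_add_cancel hij, hj]
  · left
    refine ⟨i - j, ?_⟩
    rw [← hj, ← Function.iterate_add_apply, Nat.sub_add_cancel hij, hi]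

lemma sibling_eq {v c₁ c₂ : V} (h1 : T.par c₁ = v) (h2 : T.par c₂ = v)
    (hne : c₁ ≠ v) (h : T.anc c₁ c₂) : c₁ = c₂ := by
  obtain ⟨n, hn⟩ := h
  rcases n with _ | n'
  · exact hn.symm
  · exfalso
    rw [Function.iterate_succ_apply, h2] at hn
    have hvv : T.par^[n' + 1] v = v := by
      rw [Function.iterate_succ_apply', hn, h1]
    have := T.cycle hvv (by omega)
    apply hne
    rw [← hn, this, T.root_fix, ← this]

lemma leaf_max {x : X} {u : V} (h : T.anc (T.leaf x) u) : u = T.leaf x := by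
  obtain ⟨n, hn⟩ := h
  induction n generalizing u with
  | zero => exact hn
  | succ n ih =>
    rw [Function.iterate_succ_apply] at hn
    exact T.leaf_isLeaf x u (ih hn)

lemma isLca_self {v w : V} (h : T.anc v w) : T.IsLca v v w :=
  ⟨T.anc_refl v, h, fun u hu _ => hu⟩

lemma lca_unique {l l' a b : V} (h : T.IsLca l a b) (h' : T.IsLca l' a b) : l = l' :=
  T.anc_antisymm (h'.2.2 l h.1 h.2.1) (h.2.2 l' h'.1 h'.2.1)

lemma lca_exists (a b : V) : ∃ l, T.IsLca l a b := by
  classical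
  have hex : ∃ n : ℕ, T.anc (T.par^[n] b) a := by
    obtain ⟨N, hN⟩ := T.reach b
    exact ⟨N, hN ▸ T.anc_root a⟩
  refine ⟨T.par^[Nat.find hex] b, Nat.find_spec hex, ⟨Nat.find hex, rfl⟩, ?_⟩
  rintro u hua ⟨j, rfl⟩
  by_cases hjn : Nat.find hex ≤ j
  · exact ⟨j - Nat.find hex, by
      rw [← Function.iterate_add_apply, Nat.sub_add_cancel hjn]⟩
  · exact absurd hua (Nat.find_min hex (lt_of_not_ge hjn))

lemma exists_leaf_below (v : V) : ∃ x : X, T.anc v (T.leaf x) := by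
  have _ : Finite V := T.fin
  classical
  generalize hc : {w : V | T.anc v w}.ncard = n
  induction n using Nat.strong_induction_on generalizing v with
  | _ n ih =>
    by_cases hleaf : ∃ x, T.leaf x = v
    · obtain ⟨x, rfl⟩ := hleaf
      exact ⟨x, T.anc_refl _⟩
    · have hch : ∃ u : V, T.par u = v ∧ u ≠ v := by
        by_contra hcon
        push_neg at hcon
        exact hleaf (T.leaf_only v hcon)
      obtain ⟨u, hu, hune⟩ := hch
      have hvu : T.anc v u := ⟨1, by simpa using hu⟩
      have hsub : {w : V | T.anc u w} ⊂ {w : V | T.anc v w} := by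
        constructor
        · intro w hw
          exact T.anc_trans hvu hw
        · intro hs
          have : T.anc u v := hs (T.anc_refl v)
          exact hune (T.anc_antisymm this hvu)
      have hlt : {w : V | T.anc u w}.ncard < n := by
        rw [← hc]
        exact Set.ncard_lt_ncard hsub (Set.toFinite _)
      obtain ⟨x, hx⟩ := ih _ hlt u rfl
      exact ⟨x, T.anc_trans hvu hx⟩

lemma eq_of_anc_cluster {v w : V} (h : T.anc v w) (hc : T.cluster v = T.cluster w) :
    v = w := by
  by_contra hne
  have _ : Finite V := T.fin
  classical
  have hnl : ¬ ∃ x, T.leaf x = v := by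
    rintro ⟨x, rfl⟩
    exact hne (T.leaf_max h).symm
  have h2 : 2 ≤ {u : V | T.par u = v ∧ u ≠ v}.ncard := by
    by_cases hr : v = T.root
    · subst hr
      rcases T.root_deg with hc' | hc'
      · exact absurd hc' hnl
      · exact hc'
    · exact T.inner_deg v hr hnl
  obtain ⟨c₁, c₂, hc₁, hc₂, hcc⟩ :=
    (Set.one_lt_ncard_iff (s := {u : V | T.par u = v ∧ u ≠ v}) (Set.toFinite _)).mp
      (by omega)
  -- child on the path to w
  have hex : ∃ n : ℕ, T.par^[n] w = v := h
  have hn0 : Nat.find hex ≠ 0 := by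
    intro h0
    have := Nat.find_spec hex
    rw [h0] at this
    exact hne this.symm
  set c₀ := T.par^[Nat.find hex - 1] w with hc₀def
  have hc₀par : T.par c₀ = v := by
    have h' : T.par^[(Nat.find hex - 1) + 1] w = v := by
      rw [Nat.sub_add_cancel (Nat.one_le_iff_ne_zero.mpr hn0)]
      exact Nat.find_spec hex
    rw [Function.iterate_succ_apply'] at h'
    exact h'
  have hc₀ne : c₀ ≠ v := Nat.find_min hex (by omega)
  have hc₀w : T.anc c₀ w := ⟨Nat.find hex - 1, rfl⟩
  -- pick the other child
  obtain ⟨c, hcpar, hcne, hcne₀⟩ :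
      ∃ c : V, T.par c = v ∧ c ≠ v ∧ c ≠ c₀ := by
    by_cases h1 : c₁ = c₀
    · exact ⟨c₂, hc₂.1, hc₂.2, h1 ▸ hcc.symm⟩
    · exact ⟨c₁, hc₁.1, hc₁.2, h1⟩
  obtain ⟨x, hx⟩ := T.exists_leaf_below c
  have hvx : x ∈ T.cluster v := T.anc_trans ⟨1, by simpa using hcpar⟩ hx
  have hwx : T.anc w (T.leaf x) := by
    have : x ∈ T.cluster w := hc ▸ hvx
    exact this
  have hc₀x : T.anc c₀ (T.leaf x) := T.anc_trans hc₀w hwx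
  rcases T.anc_comparable hx hc₀x with hcomp | hcomp
  · exact hcne₀ (T.sibling_eq hcpar hc₀par hcne hcomp)
  · exact hcne₀ (T.sibling_eq hc₀par hcpar hc₀ne hcomp).symm

end PhyloTree

/-- for every leaf `y` and color `m` there is a vertex `v` satisfying
(a) no `m`-edge on the path from `v` to `y` and (b) `(par v, v)` is an `m`-edge unless
`v` is the root; moreover (a)∧(b) holds iff `N_{¬m}[y] = C_T(v)`. -/
theorem clust_neighb {V X M : Type} [Fintype X] [Fintype M] [Nonempty X] [Nonempty M]
    (T : PhyloTree V X) (lab : V → Set M) (ε : X → X → Set M)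
    (hexp : Explains T lab ε) (y : X) (m : M) :
    (∃ v : V,
      (¬ ∃ u : V, T.edgeOnPath v (T.leaf y) u ∧ m ∈ lab u) ∧
      (v ≠ T.root → m ∈ lab v)) ∧
    (∀ v : V,
      ((¬ ∃ u : V, T.edgeOnPath v (T.leaf y) u ∧ m ∈ lab u) ∧
       (v ≠ T.root → m ∈ lab v)) ↔ Nbr ε m y = T.cluster v) :=  by
  classical
  have hex : ∃ n : ℕ, m ∈ lab (T.par^[n] (T.leaf y)) ∨ T.par^[n] (T.leaf y) = T.root := by
    obtain ⟨N, hN⟩ := T.reach (T.leaf y)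
    exact ⟨N, Or.inr hN⟩
  set v₀ := T.par^[Nat.find hex] (T.leaf y) with hv₀
  have hanc0 : T.anc v₀ (T.leaf y) := ⟨Nat.find hex, rfl⟩
  have hb0 : v₀ ≠ T.root → m ∈ lab v₀ := fun h => (Nat.find_spec hex).resolve_right h
  have ha0 : ¬ ∃ u, T.edgeOnPath v₀ (T.leaf y) u ∧ m ∈ lab u := by
    rintro ⟨u, ⟨l, hlca, hdown⟩, hm⟩
    have hl : l = v₀ := T.lca_unique hlca (T.isLca_self hanc0)
    subst hl
    rcases hdown with ⟨h1, h2, h3⟩ | ⟨⟨i, hi⟩, hne, ⟨j, hj⟩⟩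
    · exact h2 (T.anc_antisymm h3 h1)
    · have hi1 : i ≠ 0 := by
        intro h0
        rw [h0] at hi
        exact hne hi
      have hjk : j < Nat.find hex := by
        by_contra hjk
        push_neg at hjk
        have hu : T.par^[j - Nat.find hex] v₀ = u := by
          rw [hv₀, ← Function.iterate_add_apply, Nat.sub_add_cancel hjk, hj]
        have hcyc : T.par^[i + (j - Nat.find hex)] v₀ = v₀ := by
          rw [Function.iterate_add_apply, hu, hi]
        have hroot : v₀ = T.root := T.cycle hcyc (by omega)
        have hur : u = T.root := by rw [← hu, hroot, T.root_fix]
        exact hne (hur.trans hroot.symm)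
      rw [← hj] at hm
      exact absurd (Or.inl hm) (Nat.find_min hex hjk)
  have fwd : ∀ v : V,
      ((¬ ∃ u, T.edgeOnPath v (T.leaf y) u ∧ m ∈ lab u) ∧ (v ≠ T.root → m ∈ lab v)) →
      Nbr ε m y = T.cluster v := by
    rintro v ⟨ha, hb⟩
    have hanc : T.anc v (T.leaf y) := by
      by_contra hnanc
      obtain ⟨l, hlca⟩ := T.lca_exists v (T.leaf y)
      have hvl : v ≠ l := by
        rintro rfl
        exact hnanc hlca.2.1
      have hvroot : v ≠ T.root := by
        rintro rfl
        exact hnanc (T.anc_root _)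
      exact ha ⟨v, ⟨l, hlca, Or.inl ⟨hlca.1, hvl, T.anc_refl v⟩⟩, hb hvroot⟩
    ext x
    simp only [Nbr, Set.mem_union, Set.mem_setOf_eq, Set.mem_singleton_iff,
      PhyloTree.cluster]
    constructor
    · rintro (⟨hxy, hx⟩ | rfl)
      · by_contra hnx
        obtain ⟨l, hlca⟩ := T.lca_exists (T.leaf x) (T.leaf y)
        rcases T.anc_comparable hanc hlca.2.1 with hvl | hlv
        · exact hnx (T.anc_trans hvl hlca.1)
        · have hvnel : v ≠ l := by
            rintro rfl
            exact hnx hlca.1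
          have hvroot : v ≠ T.root := by
            rintro rfl
            exact hnx (T.anc_root _)
          exact hx ((hexp x y hxy m).mpr ⟨l, hlca, v, ⟨hlv, hvnel, hanc⟩, hb hvroot⟩)
      · exact hanc
    · intro hx
      by_cases hxy : x = y
      · exact Or.inr hxy
      · refine Or.inl ⟨hxy, fun hm => ?_⟩
        obtain ⟨l, hlca, u, ⟨hlu, hul, huy⟩, hmu⟩ := (hexp x y hxy m).mp hm
        have hvl : T.anc v l := hlca.2.2 v hx hanc
        have huv : u ≠ v := by
          rintro rfl
          exact hul (T.anc_antisymm hlu hvl).symm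
        exact ha ⟨u, ⟨v, T.isLca_self hanc, Or.inr ⟨T.anc_trans hvl hlu, huv, huy⟩⟩, hmu⟩
  refine ⟨⟨v₀, ha0, hb0⟩, fun v => ⟨fwd v, ?_⟩⟩
  intro hN
  have hN0 : Nbr ε m y = T.cluster v₀ := fwd v₀ ⟨ha0, hb0⟩
  have hcc : T.cluster v = T.cluster v₀ := hN.symm.trans hN0
  have hanc : T.anc v (T.leaf y) := by
    have hy : y ∈ Nbr ε m y := Set.mem_union_right _ rfl
    rw [hN] at hy
    exact hy
  have hvv : v = v₀ := by
    rcases T.anc_comparable hanc hanc0 with h | h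
    · exact T.eq_of_anc_cluster h hcc
    · exact (T.eq_of_anc_cluster h hcc.symm).symm
  rw [hvv]
  exact ⟨ha0, hb0⟩
end

section
/- Let ε be a Fitch map and define the triple set R(ε) = ⋃_{N ∈ N[ε]} { ab|c : a,b ∈ N, c ∈ X∖N }. Then every edge-labeled tree (T,λ) explaining ε displays all triples in R(ε), i.e., R(ε) ⊆ R(T). -/
/-- The triple relation `R(ε)`: `ab|c ∈ R(ε)`. -/
def TripleRel {X M : Type} (ε : X → X → Set M) (a b c : X) : Prop :=
  a ≠ b ∧ ∃ N ∈ NbrSet ε, a ∈ N ∧ b ∈ N ∧ c ∉ N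


namespace PhyloTree

variable {V X : Type} (T : PhyloTree V X)

lemma anc_trans_s5 {u v w : V} (h1 : T.anc u v) (h2 : T.anc v w) : T.anc u w := by
  obtain ⟨n, rfl⟩ := h1
  obtain ⟨k, rfl⟩ := h2
  exact ⟨n + k, Function.iterate_add_apply _ n k w⟩

lemma anc_antisymm_s5 {u v : V} (h1 : T.anc u v) (h2 : T.anc v u) : u = v := by
  obtain ⟨n, hn⟩ := h1
  obtain ⟨k, hk⟩ := h2
  rcases Nat.eq_zero_or_pos (k + n) with h | h
  · have hn0 : n = 0 := by omega
    rw [hn0] at hn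
    exact hn.symm
  · have hcyc : T.par^[k + n] v = v := by
      rw [Function.iterate_add_apply, hn, hk]
    have hcycm : ∀ j, T.par^[j * (k + n)] v = v := by
      intro j; induction j with
      | zero => simp
      | succ j ih => rw [Nat.succ_mul, Function.iterate_add_apply, hcyc, ih]
    obtain ⟨m, hm⟩ := T.reach v
    have hle : m + 1 ≤ (m + 1) * (k + n) := Nat.le_mul_of_pos_right _ h
    have hv : v = T.root := by
      have h1' : T.par^[(m+1) * (k + n)] v = v := hcycm (m+1)
      have h2' : T.par^[(m+1) * (k + n)] v = T.root := by
        rw [show (m+1)*(k+n) = ((m+1)*(k+n) - m) + m from by omega,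
          Function.iterate_add_apply, hm, Function.iterate_fixed T.par_root]
      rw [← h1', h2']
    rw [← hn, hv, Function.iterate_fixed T.par_root]

lemma anc_total {u v w : V} (h1 : T.anc u w) (h2 : T.anc v w) :
    T.anc u v ∨ T.anc v u := by
  obtain ⟨n, hn⟩ := h1
  obtain ⟨k, hk⟩ := h2
  rcases le_total n k with h | h
  · right
    refine ⟨k - n, ?_⟩
    rw [← hn, ← Function.iterate_add_apply, show k - n + n = k from by omega, hk]
  · left
    refine ⟨n - k, ?_⟩
    rw [← hk, ← Function.iterate_add_apply, show n - k + k = n from by omega, hn]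

lemma nbr_eq_cluster {M : Type} {ε : X → X → Set M} {lab : V → Set M}
    (hexp : Explains T lab ε) (m : M) (y : X) :
    ∃ v : V, Nbr ε m y = T.cluster v := by
  classical
  set y' := T.leaf y with hy'
  -- P n : path from par^[n] y' down to y' is m-free
  set P : ℕ → Prop := fun n => ∀ u : V, T.edgeOnDown (T.par^[n] y') y' u → m ∉ lab u
    with hP
  have hex : ∃ n, ¬ P (n+1) ∨ T.par^[n] y' = T.root := by
    obtain ⟨n, hn⟩ := T.reach y'
    exact ⟨n, Or.inr hn⟩
  set n₀ := Nat.find hex with hn₀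
  set v := T.par^[n₀] y' with hv
  have hvy : T.anc v y' := ⟨n₀, rfl⟩
  -- P n₀ holds
  have hPn : P n₀ := by
    rcases Nat.eq_zero_or_pos n₀ with h0 | h0
    · intro u hu
      rw [h0] at hu
      obtain ⟨h1, h2, h3⟩ := hu
      simp only [Function.iterate_zero_apply] at h1
      exact absurd (T.anc_antisymm_s5 h3 h1) h2
    · have := Nat.find_min hex (show n₀ - 1 < n₀ from by omega)
      push_neg at this
      rw [show n₀ - 1 + 1 = n₀ from by omega] at this
      exact this.1
  -- edges below l (between v and y') are edges below v
  have hsub : ∀ l : V, T.anc v l → T.anc l y' →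
      ∀ u : V, T.edgeOnDown l y' u → T.edgeOnDown v y' u := by
    intro l hvl hly u ⟨h1, h2, h3⟩
    refine ⟨T.anc_trans_s5 hvl h1, ?_, h3⟩
    intro huv
    rw [huv] at h1 h2
    exact h2 (T.anc_antisymm_s5 hvl h1)
  -- (B) : x in cluster v, x ≠ y → m ∉ ε x y
  have hB : ∀ x : X, x ≠ y → T.anc v (T.leaf x) → m ∉ ε x y := by
    intro x hxy hvx hm
    obtain ⟨l, hl, u, hu, hmu⟩ := (hexp x y hxy m).1 hm
    have hvl : T.anc v l := hl.2.2 v hvx hvy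
    exact hPn u (hsub l hvl hl.2.1 u hu) hmu
  -- (C) : x ≠ y, m ∉ ε x y → x in cluster v
  have hC : ∀ x : X, x ≠ y → m ∉ ε x y → T.anc v (T.leaf x) := by
    intro x hxy hm
    by_contra hvx
    have hvroot : v ≠ T.root := by
      intro h
      exact hvx (h ▸ T.anc_root (T.leaf x))
    have hnp : ¬ P (n₀ + 1) := by
      rcases Nat.find_spec hex with h | h
      · exact h
      · exact absurd h hvroot
    have hnp' : ∃ u, T.edgeOnDown (T.par^[n₀+1] y') y' u ∧ m ∈ lab u := by
      by_contra hne
      push_neg at hne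
      apply hnp
      rw [hP]
      intro u hu
      exact hne u hu
    obtain ⟨u, hu, hmu⟩ := hnp'
    obtain ⟨l, hl⟩ := T.lca_exists (T.leaf x) y'
    have hlv : T.anc l v := by
      rcases T.anc_total (w := y') hvy hl.2.1 with h | h
      · exact absurd (T.anc_trans_s5 h hl.1) hvx
      · exact h
    have hlne : l ≠ v := by
      intro h
      exact hvx (h ▸ hl.1)
    obtain ⟨j, hj⟩ := hlv
    have hj1 : 1 ≤ j := by
      rcases Nat.eq_zero_or_pos j with h | h
      · rw [h] at hj; exact absurd hj.symm hlne
      · exact h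
    have hl1 : T.anc l (T.par^[n₀+1] y') := by
      refine ⟨j - 1, ?_⟩
      rw [← Function.iterate_add_apply, show j - 1 + (n₀ + 1) = j + n₀ from by omega,
        Function.iterate_add_apply, ← hv, hj]
    have hedge : T.edgeOnDown l y' u := by
      obtain ⟨h1, h2, h3⟩ := hu
      refine ⟨T.anc_trans_s5 hl1 h1, ?_, h3⟩
      intro hul
      rw [hul] at h1
      exact h2 (by rw [hul]; exact T.anc_antisymm_s5 hl1 h1)
    exact hm ((hexp x y hxy m).2 ⟨l, hl, u, hedge, hmu⟩)
  refine ⟨v, ?_⟩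
  ext x
  simp only [Nbr, Set.mem_union, Set.mem_setOf_eq, Set.mem_singleton_iff, cluster]
  constructor
  · rintro (⟨hxy, hm⟩ | rfl)
    · exact hC x hxy hm
    · exact hvy
  · intro hx
    by_cases hxy : x = y
    · exact Or.inr hxy
    · exact Or.inl ⟨hxy, hB x hxy hx⟩

end PhyloTree

/-- every edge-labeled tree explaining a Fitch map `ε` displays all
triples of `R(ε)`. -/
theorem triples_displayed {V X M : Type} [Fintype X] [Fintype M] [Nonempty X] [Nonempty M]
    (ε : X → X → Set M) (T : PhyloTree V X) (lab : V → Set M)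
    (hexp : Explains T lab ε) :
    ∀ a b c : X, TripleRel ε a b c → T.Displays a b c := by
  rintro a b c ⟨hab, N, ⟨m, y, rfl⟩, ha, hb, hc⟩
  obtain ⟨v, hN⟩ := T.nbr_eq_cluster hexp m y
  rw [hN] at ha hb hc
  obtain ⟨l2, hl2⟩ := T.lca_exists (T.leaf a) (T.leaf b)
  obtain ⟨l3, hl3⟩ := T.lca_exists l2 (T.leaf c)
  refine ⟨l3, l2, hl2, hl3, ?_⟩
  intro h
  apply hc
  have hvl2 : T.anc v l2 := hl2.2.2 v ha hb
  exact T.anc_trans_s5 hvl2 (h ▸ hl3.2.1)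
end
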